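/- arXiv:1406.6130 — 2 statements merged into one kernel-verified Lean document; each statement's English description precedes it below -/
import Mathlib

section
/- Let X be a finite nonempty set and F : Δ_X → ℝ a convex function differentiable on Δ_X, with entropic dual F*(v) := sup_{p∈Δ_X} ⟨p, v⟩ − F(p). Define ℓ^F : Δ_X → ℝ^X by ℓ^F(p) := F*(∇F(p))𝟙 − ∇F(p). Then for all p, p' ∈ Δ_X: ⟨p, ℓ^F(p')⟩ − ⟨p, ℓ^F(p)⟩ = D_F(p, p') := F(p) − F(p') − ⟨p − p', ∇F(p')⟩. -/
/-! By the tangent-plane inequality for the convex `F`, the supremum defining `F*(∇F(p))` is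
attained at `p`, so `F*(∇F(p)) = ⟨p, ∇F(p)⟩ - F(p)`. As `p` sums to one,
`⟨p, ℓ^F(q)⟩ = F*(∇F(q)) - ⟨p, ∇F(q)⟩`, and the identity becomes linear algebra. -/

open Finset

/-- The probability simplex on a finite type `Θ`. -/
def probSimplex (Θ : Type*) [Fintype Θ] : Set (Θ → ℝ) :=
  {μ | (∀ θ, 0 ≤ μ θ) ∧ ∑ θ, μ θ = 1}

/-- The relative interior of the probability simplex. -/
def probRelint (Θ : Type*) [Fintype Θ] : Set (Θ → ℝ) :=
  {μ | (∀ θ, 0 < μ θ) ∧ ∑ θ, μ θ = 1}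

/-- Standard inner product on `ℝ^Θ`. -/
noncomputable def ip {Θ : Type*} [Fintype Θ] (μ v : Θ → ℝ) : ℝ := ∑ θ, μ θ * v θ

/-- Entropic dual: `Φ*(v) = sup_{μ ∈ Δ_Θ} ⟨μ, v⟩ - Φ(μ)`. -/
noncomputable def edual {Θ : Type*} [Fintype Θ] (Φ : (Θ → ℝ) → ℝ) (v : Θ → ℝ) : ℝ :=
  sSup ((fun μ => ip μ v - Φ μ) '' probSimplex Θ)

/-- The continuous linear map `v ↦ ⟨w, v⟩` representing a gradient vector `w`. -/
noncomputable def pairCLM {Θ : Type*} [Fintype Θ] (w : Θ → ℝ) : (Θ → ℝ) →L[ℝ] ℝ :=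
  ∑ θ, w θ • ContinuousLinearMap.proj θ

/-- Bregman divergence of `Φ` with gradient map `g`. -/
noncomputable def breg {Θ : Type*} [Fintype Θ] (Φ : (Θ → ℝ) → ℝ)
    (g : (Θ → ℝ) → Θ → ℝ) (μ μ' : Θ → ℝ) : ℝ :=
  Φ μ - Φ μ' - ip (μ - μ') (g μ')


/-- The proper loss associated to an entropy `F` (Savage representation):
`ℓ^F(p) = F*(∇F(p))𝟙 − ∇F(p)`. -/
noncomputable def properLoss {X : Type*} [Fintype X]
    (F : (X → ℝ) → ℝ) (gF : (X → ℝ) → X → ℝ) (p : X → ℝ) : X → ℝ :=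
  fun x => edual F (gF p) - gF p x

theorem ConvexOn.hasFDerivAt_apply_sub_le {E : Type*} [NormedAddCommGroup E] [NormedSpace ℝ E]
    {s : Set E} {f : E → ℝ} {f' : E →L[ℝ] ℝ} {x y : E}
    (hf : ConvexOn ℝ s f) (hx : x ∈ s) (hy : y ∈ s) (hfx : HasFDerivAt f f' x) :
    f' (y - x) ≤ f y - f x := by
  set L : ℝ →ᵃ[ℝ] E := AffineMap.lineMap x y
  have hline : ConvexOn ℝ (L ⁻¹' s) (f ∘ L) := hf.comp_affineMap L
  have hderiv : HasDerivAt (f ∘ L) (f' (y - x)) 0 := by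
    refine HasFDerivAt.comp_hasDerivAt (0 : ℝ) ?_ AffineMap.hasDerivAt_lineMap
    simpa [L] using hfx
  have h0 : (0 : ℝ) ∈ L ⁻¹' s := by simpa [L] using hx
  have h1 : (1 : ℝ) ∈ L ⁻¹' s := by simpa [L] using hy
  simpa [slope_def_field, L] using hline.le_slope_of_hasDerivAt h0 h1 one_pos hderiv

section Simplex

variable {X : Type*} [Fintype X]

theorem pairCLM_apply (w v : X → ℝ) : pairCLM w v = ip v w := by
  simp [pairCLM, ip, mul_comm]

theorem ip_sub_left (μ ν v : X → ℝ) : ip (μ - ν) v = ip μ v - ip ν v := by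
  simp only [ip, Pi.sub_apply, sub_mul, sum_sub_distrib]

theorem ip_const_sub {p : X → ℝ} (hp : p ∈ probSimplex X) (c : ℝ) (v : X → ℝ) :
    ip p (fun x => c - v x) = c - ip p v := by
  simp only [ip, mul_sub, sum_sub_distrib, ← sum_mul, hp.2, one_mul]

theorem edual_gradient_eq {F : (X → ℝ) → ℝ} (hconv : ConvexOn ℝ (probSimplex X) F)
    {w p : X → ℝ} (hp : p ∈ probSimplex X) (hFp : HasFDerivAt F (pairCLM w) p) :
    edual F w = ip p w - F p := by
  refine IsGreatest.csSup_eq ⟨⟨p, hp, rfl⟩, ?_⟩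
  rintro _ ⟨μ, hμ, rfl⟩
  have htangent := hconv.hasFDerivAt_apply_sub_le hp hμ hFp
  rw [pairCLM_apply, ip_sub_left] at htangent
  dsimp only
  linarith

end Simplex

theorem stmt_12_general {X : Type*} [Fintype X]
    (F : (X → ℝ) → ℝ)
    (hconv : ConvexOn ℝ (probSimplex X) F)
    (gF : (X → ℝ) → X → ℝ)
    (hdiff : ∀ p ∈ probSimplex X, HasFDerivAt F (pairCLM (gF p)) p)
    (p p' : X → ℝ) (hp : p ∈ probSimplex X) (hp' : p' ∈ probSimplex X) :
    ip p (properLoss F gF p') - ip p (properLoss F gF p)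
      = F p - F p' - ip (p - p') (gF p') := by
  unfold properLoss
  rw [ip_const_sub hp, ip_const_sub hp,
    edual_gradient_eq hconv hp' (hdiff p' hp'), edual_gradient_eq hconv hp (hdiff p hp),
    ip_sub_left]
  ring

/-- The excess risk of `ℓ^F` is the Bregman divergence of `F`. -/
theorem stmt_12 {X : Type*} [Fintype X] [Nonempty X]
    (F : (X → ℝ) → ℝ)
    (hconv : ConvexOn ℝ (probSimplex X) F)
    (gF : (X → ℝ) → X → ℝ)
    (hdiff : ∀ p ∈ probSimplex X, HasFDerivAt F (pairCLM (gF p)) p)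
    (p p' : X → ℝ) (hp : p ∈ probSimplex X) (hp' : p' ∈ probSimplex X) :
    ip p (properLoss F gF p') - ip p (properLoss F gF p)
      = F p - F p' - ip (p - p') (gF p') :=
  stmt_12_general F hconv gF hdiff p p' hp hp'
end

section
/- Let Θ be a finite nonempty set, X a finite set with |X| ≥ 2, and 𝒜 a nonempty set. Let Φ be an entropy on Δ_Θ differentiable on relint(Δ_Θ) that fails strict convexity in the sense that there exist distinct μ*, μ'' ∈ relint(Δ_Θ) with D_Φ(μ*, μ'') = 0. Let ℓ : 𝒜 → ℝ^X be a loss such that for every p ∈ Δ_X the infimum inf_{a∈𝒜} ⟨p, ℓ(a)⟩ is attained and the Bayes risk L(p) := inf_{a∈𝒜} ⟨p, ℓ(a)⟩ is strictly concave on Δ_X. Then for every η > 0, ℓ is not η⁻¹Φ-mixable. -/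
/-!
Since `D_Φ(μ*, μ'') = 0 = D_Φ(μ'', μ'')`, a prediction that is `η⁻¹Φ`-mixable at base `μ''` must
beat both `⟨μ*, ℓ_x(A)⟩` and `⟨μ'', ℓ_x(A)⟩` for every outcome `x`. Taking `A` with value `a₁` at
a coordinate `θ₀` where `μ*` and `μ''` differ and `a₂` elsewhere, one prediction beats the mixture
of `ℓ(a₁)` and `ℓ(a₂)` with weight `κ = μ* θ₀` on one outcome and `κ' = μ'' θ₀ ≠ κ` on another.
On the segment between these two outcomes the uniform distribution `p` is a proper mixture
`w q + (1 - w) q'` with `q ≠ q'` such that this bound reads `⟨p, ℓ(â)⟩ ≤ w L(q) + (1 - w) L(q')`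
when `a₁, a₂` are Bayes acts for `q, q'`; strict concavity makes the right side `< L(p)`.
-/

open Finset

theorem ConvexOn.apply_sub_le_of_hasFDerivAt {E : Type*} [NormedAddCommGroup E]
    [NormedSpace ℝ E] {s : Set E} {f : E → ℝ} {f' : E →L[ℝ] ℝ} {x y : E}
    (hf : ConvexOn ℝ s f) (hx : x ∈ s) (hy : y ∈ s) (hf' : HasFDerivAt f f' x) :
    f' (y - x) ≤ f y - f x := by
  let γ : ℝ →ᵃ[ℝ] E := AffineMap.lineMap x y
  have hγ : ConvexOn ℝ (Set.Icc 0 1) (f ∘ γ) :=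
    (hf.comp_affineMap γ).subset (fun t ht => hf.1.lineMap_mem hx hy ht) (convex_Icc 0 1)
  have hγ' : HasDerivAt (f ∘ γ) (f' (y - x)) 0 :=
    (by simpa [γ] using hf' : HasFDerivAt f f' (γ 0)).comp_hasDerivAt 0
      AffineMap.hasDerivAt_lineMap
  simpa [slope, γ] using hγ.le_slope_of_hasDerivAt (by simp) (by simp) one_pos hγ'

section Simplex

variable {Θ : Type*} [Fintype Θ]

lemma probRelint_subset_probSimplex : probRelint Θ ⊆ probSimplex Θ :=
  fun _ hμ => ⟨fun θ => (hμ.1 θ).le, hμ.2⟩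

lemma mem_Icc_of_mem_probSimplex {μ : Θ → ℝ} (hμ : μ ∈ probSimplex Θ) (θ : Θ) :
    μ θ ∈ Set.Icc 0 1 :=
  ⟨hμ.1 θ, hμ.2 ▸ single_le_sum (fun i _ => hμ.1 i) (mem_univ θ)⟩

lemma neg_sum_abs_le_ip {μ : Θ → ℝ} (hμ : μ ∈ probSimplex Θ) (v : Θ → ℝ) :
    -∑ θ, |v θ| ≤ ip μ v := by
  have hv : ∀ θ, -∑ θ, |v θ| ≤ v θ := fun θ =>
    (neg_le_neg (single_le_sum (fun i _ => abs_nonneg (v i)) (mem_univ θ))).trans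
      (neg_abs_le (v θ))
  calc -∑ θ, |v θ| = ∑ θ, μ θ * -∑ θ, |v θ| := by rw [← sum_mul, hμ.2, one_mul]
    _ ≤ ip μ v := sum_le_sum fun θ _ => mul_le_mul_of_nonneg_left (hv θ) (hμ.1 θ)

lemma ip_ite [DecidableEq Θ] {μ : Θ → ℝ} (hμ : ∑ θ, μ θ = 1) (θ₀ : Θ) (c d : ℝ) :
    ip μ (fun θ => if θ = θ₀ then c else d) = μ θ₀ * c + (1 - μ θ₀) * d := by
  calc ip μ (fun θ => if θ = θ₀ then c else d)
      = ∑ θ, μ θ * (if θ = θ₀ then c else d) := rfl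
    _ = ∑ θ, (μ θ * d + if θ = θ₀ then μ θ * (c - d) else 0) :=
        sum_congr rfl fun θ _ => by split_ifs <;> ring
    _ = μ θ₀ * c + (1 - μ θ₀) * d := by
        rw [sum_add_distrib, ← sum_mul, hμ, sum_ite_eq' univ θ₀]
        simp only [mem_univ, if_true]
        ring

end Simplex

section Bregman

variable {Θ : Type*} [Fintype Θ] {Φ : (Θ → ℝ) → ℝ} {g : (Θ → ℝ) → Θ → ℝ}

lemma breg_self (μ : Θ → ℝ) : breg Φ g μ μ = 0 := by
  simp [breg, ip]

lemma breg_nonneg {s : Set (Θ → ℝ)} (hΦ : ConvexOn ℝ s Φ) {μ μ' : Θ → ℝ} (hμ : μ ∈ s)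
    (hμ' : μ' ∈ s) (hg : HasFDerivAt Φ (pairCLM (g μ)) μ) : 0 ≤ breg Φ g μ' μ := by
  have h := hΦ.apply_sub_le_of_hasFDerivAt hμ hμ' hg
  have hip : pairCLM (g μ) (μ' - μ) = ip (μ' - μ) (g μ) := by
    simp [pairCLM, ip, mul_comm]
  rw [breg]
  linarith

lemma le_ip_of_le_sInf_of_breg_eq_zero (hΦ : ConvexOn ℝ (probSimplex Θ) Φ)
    {μ μ' : Θ → ℝ} (hμ : μ ∈ probSimplex Θ) (hμ' : μ' ∈ probSimplex Θ)
    (hg : HasFDerivAt Φ (pairCLM (g μ)) μ) (hD : breg Φ g μ' μ = 0) {c : ℝ} (hc : 0 ≤ c)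
    {v : Θ → ℝ} {y : ℝ} (hy : y ≤ sInf ((fun ν => ip ν v + c * breg Φ g ν μ) '' probSimplex Θ)) :
    y ≤ ip μ' v := by
  have hbdd : BddBelow ((fun ν => ip ν v + c * breg Φ g ν μ) '' probSimplex Θ) := by
    refine ⟨-∑ θ, |v θ|, ?_⟩
    rintro _ ⟨ν, hν, rfl⟩
    have := mul_nonneg hc (breg_nonneg hΦ hμ hν hg)
    linarith [neg_sum_abs_le_ip hν v]
  simpa [hD] using hy.trans (csInf_le hbdd ⟨μ', hμ', rfl⟩)

end Bregman

section TwoPointDist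

variable {X : Type*} [DecidableEq X]

noncomputable def twoPointDist (x y : X) (t : ℝ) : X → ℝ :=
  Pi.single x t + Pi.single y (1 - t)

lemma twoPointDist_mem [Fintype X] {x y : X} {t : ℝ} (ht : t ∈ Set.Icc 0 1) :
    twoPointDist x y t ∈ probSimplex X := by
  refine ⟨fun z => ?_, by simp [twoPointDist, sum_add_distrib]⟩
  simp only [twoPointDist, Pi.add_apply, Pi.single_apply]
  split_ifs <;> linarith [ht.1, ht.2]

lemma sum_twoPointDist_mul [Fintype X] (x y : X) (t : ℝ) (v : X → ℝ) :
    ∑ z, twoPointDist x y t z * v z = t * v x + (1 - t) * v y :=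
  show twoPointDist x y t ⬝ᵥ v = _ by
    rw [twoPointDist, add_dotProduct, single_dotProduct, single_dotProduct]

lemma twoPointDist_injective {x y : X} (hxy : x ≠ y) : Function.Injective (twoPointDist x y) :=
  fun t u h => by simpa [twoPointDist, hxy] using congrFun h x

lemma twoPointDist_combo (x y : X) {a b : ℝ} (hab : a + b = 1) (t u : ℝ) :
    a • twoPointDist x y t + b • twoPointDist x y u = twoPointDist x y (a * t + b * u) := by
  have h : a * (1 - t) + b * (1 - u) = 1 - (a * t + b * u) := by linear_combination hab
  simp only [twoPointDist]
  rw [← h]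
  ext z
  simp only [Pi.add_apply, Pi.smul_apply, smul_eq_mul, Pi.single_apply]
  split_ifs <;> ring

end TwoPointDist

section BayesRisk

variable {X 𝒜 : Type*} [Fintype X] {ℓ : 𝒜 → X → ℝ}

noncomputable def bayesRisk (ℓ : 𝒜 → X → ℝ) (p : X → ℝ) : ℝ :=
  ⨅ a, ∑ x, p x * ℓ a x

lemma bayesRisk_eq {p : X → ℝ} {a : 𝒜} (ha : ∀ a', ∑ x, p x * ℓ a x ≤ ∑ x, p x * ℓ a' x) :
    bayesRisk ℓ p = ∑ x, p x * ℓ a x :=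
  IsLeast.csInf_eq ⟨⟨a, rfl⟩, by rintro _ ⟨a', rfl⟩; exact ha a'⟩

lemma bayesRisk_le {p : X → ℝ} {a : 𝒜} (ha : ∀ a', ∑ x, p x * ℓ a x ≤ ∑ x, p x * ℓ a' x)
    (a' : 𝒜) : bayesRisk ℓ p ≤ ∑ x, p x * ℓ a' x :=
  (bayesRisk_eq ha).trans_le (ha a')

theorem StrictConcaveOn.not_forall_exists_le_mix
    (hL : StrictConcaveOn ℝ (probSimplex X) (bayesRisk ℓ))
    (hatt : ∀ p ∈ probSimplex X, ∃ a : 𝒜, ∀ a' : 𝒜, ∑ x, p x * ℓ a x ≤ ∑ x, p x * ℓ a' x)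
    {x y : X} (hxy : x ≠ y) {κ κ' : ℝ} (hκ : κ ∈ Set.Icc 0 1) (hκ' : κ' ∈ Set.Icc 0 1)
    (hne : κ ≠ κ') :
    ¬ ∀ a₁ a₂ : 𝒜, ∃ â : 𝒜, ℓ â x ≤ κ * ℓ a₁ x + (1 - κ) * ℓ a₂ x ∧
      ℓ â y ≤ κ' * ℓ a₁ y + (1 - κ') * ℓ a₂ y := by
  classical
  intro hmix
  obtain ⟨hκ₀, hκ₁⟩ := hκ
  obtain ⟨hκ'₀, hκ'₁⟩ := hκ'
  have hs : 0 < κ + κ' ∧ κ + κ' < 2 := by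
    rcases hne.lt_or_gt with h | h <;> constructor <;> linarith
  -- With `q, q'` the two-point distributions at `t, u`, we get `½ δ_x + ½ δ_y = w q + (1 - w) q'`,
  -- and `w q`, `(1 - w) q'` are exactly the weights that the bounds on `â` put on `a₁`, `a₂`.
  set w := (κ + κ') / 2 with hw_def
  set t := κ / (κ + κ') with ht_def
  set u := (1 - κ) / (2 - κ - κ') with hu_def
  have hw : 0 < w ∧ 0 < 1 - w := ⟨by linarith, by linarith⟩
  have hs₀ : κ + κ' ≠ 0 := hs.1.ne'
  have hs₂ : 2 - κ - κ' ≠ 0 := by linarith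
  have hwt : w * t = κ / 2 := by rw [hw_def, ht_def]; field_simp
  have hwt' : w * (1 - t) = κ' / 2 := by rw [hw_def, ht_def]; field_simp; ring
  have hwu : (1 - w) * u = (1 - κ) / 2 := by rw [hw_def, hu_def]; field_simp; ring
  have hwu' : (1 - w) * (1 - u) = (1 - κ') / 2 := by rw [hw_def, hu_def]; field_simp; ring
  have ht : t ∈ Set.Icc 0 1 := ⟨by positivity, (div_le_one hs.1).2 (by linarith)⟩
  have hu : u ∈ Set.Icc 0 1 :=
    ⟨div_nonneg (by linarith) (by linarith), (div_le_one (by linarith)).2 (by linarith)⟩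
  have htu : t ≠ u := by
    intro h
    rw [div_eq_div_iff hs₀ hs₂] at h
    exact hne (by linear_combination h)
  obtain ⟨a₁, ha₁⟩ := hatt _ (twoPointDist_mem (x := x) (y := y) ht)
  obtain ⟨a₂, ha₂⟩ := hatt _ (twoPointDist_mem (x := x) (y := y) hu)
  obtain ⟨a₀, ha₀⟩ := hatt _ (twoPointDist_mem (x := x) (y := y) (t := 1 / 2) (by norm_num))
  obtain ⟨â, hâx, hây⟩ := hmix a₁ a₂
  have hp : w • twoPointDist x y t + (1 - w) • twoPointDist x y u = twoPointDist x y (1 / 2) := by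
    rw [twoPointDist_combo x y (add_sub_cancel w 1)]
    congr 1
    linarith
  have hgap := hL.2 (twoPointDist_mem ht) (twoPointDist_mem hu)
    ((twoPointDist_injective hxy).ne htu) hw.1 hw.2 (add_sub_cancel w 1)
  rw [hp, smul_eq_mul, smul_eq_mul, bayesRisk_eq ha₁, bayesRisk_eq ha₂, sum_twoPointDist_mul,
    sum_twoPointDist_mul] at hgap
  have hâ := bayesRisk_le ha₀ â
  rw [sum_twoPointDist_mul] at hâ
  have hmix_eq : w * (t * ℓ a₁ x + (1 - t) * ℓ a₁ y) + (1 - w) * (u * ℓ a₂ x + (1 - u) * ℓ a₂ y)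
      = (κ * ℓ a₁ x + (1 - κ) * ℓ a₂ x) / 2 + (κ' * ℓ a₁ y + (1 - κ') * ℓ a₂ y) / 2 := by
    linear_combination ℓ a₁ x * hwt + ℓ a₁ y * hwt' + ℓ a₂ x * hwu + ℓ a₂ y * hwu'
  linarith

end BayesRisk

theorem stmt_18_general {Θ X 𝒜 : Type*} [Fintype Θ] [Fintype X]
    (hX : 2 ≤ Fintype.card X)
    (Φ : (Θ → ℝ) → ℝ)
    (hconv : ConvexOn ℝ (probSimplex Θ) Φ)
    (g : (Θ → ℝ) → Θ → ℝ)
    (hg : ∀ μ ∈ probRelint Θ, HasFDerivAt Φ (pairCLM (g μ)) μ)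
    (μs μ'' : Θ → ℝ) (hμs : μs ∈ probRelint Θ) (hμ'' : μ'' ∈ probRelint Θ)
    (hne : μs ≠ μ'') (hD : breg Φ g μs μ'' = 0)
    (ℓ : 𝒜 → X → ℝ)
    (hatt : ∀ p ∈ probSimplex X, ∃ a : 𝒜, ∀ a' : 𝒜,
      ∑ x, p x * ℓ a x ≤ ∑ x, p x * ℓ a' x)
    (hL : StrictConcaveOn ℝ (probSimplex X) (fun p => ⨅ a : 𝒜, ∑ x, p x * ℓ a x))
    (η : ℝ) (hη : 0 < η) :
    ¬ (∀ A : Θ → 𝒜, ∀ μ ∈ probRelint Θ, ∃ ahat : 𝒜, ∀ x : X,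
        ℓ ahat x ≤ sInf ((fun μ' => ip μ' (fun θ => ℓ (A θ) x) + η⁻¹ * breg Φ g μ' μ) ''
          probSimplex Θ)) := by
  classical
  intro hmix
  obtain ⟨θ₀, hθ₀⟩ := Function.ne_iff.1 hne
  obtain ⟨x, y, hxy⟩ := Fintype.exists_pair_of_one_lt_card hX
  have hμs' := probRelint_subset_probSimplex hμs
  have hμ''' := probRelint_subset_probSimplex hμ''
  refine StrictConcaveOn.not_forall_exists_le_mix (ℓ := ℓ) hL hatt hxy
    (mem_Icc_of_mem_probSimplex hμs' θ₀) (mem_Icc_of_mem_probSimplex hμ''' θ₀) hθ₀ fun a₁ a₂ => ?_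
  obtain ⟨â, hâ⟩ := hmix (fun θ => if θ = θ₀ then a₁ else a₂) μ'' hμ''
  have hâ_le : ∀ μ ∈ probSimplex Θ, breg Φ g μ μ'' = 0 →
      ∀ z, ℓ â z ≤ μ θ₀ * ℓ a₁ z + (1 - μ θ₀) * ℓ a₂ z := fun μ hμ h0 z => by
    have := le_ip_of_le_sInf_of_breg_eq_zero hconv hμ''' hμ (hg μ'' hμ'') h0
      (inv_nonneg.2 hη.le) (hâ z)
    simpa only [apply_ite (ℓ · z), ip_ite hμ.2] using this
  exact ⟨â, hâ_le μs hμs' hD x, hâ_le μ'' hμ''' (breg_self μ'') y⟩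

/-- If `Φ` fails strict convexity (two distinct relative-interior points with zero
Bregman divergence), then no loss with attained strictly concave Bayes risk is
`η⁻¹Φ`-mixable for any `η > 0`. -/
theorem stmt_18 {Θ X 𝒜 : Type*} [Fintype Θ] [Nonempty Θ] [Fintype X] [Nonempty 𝒜]
    (hX : 2 ≤ Fintype.card X)
    (Φ : (Θ → ℝ) → ℝ)
    (hconv : ConvexOn ℝ (probSimplex Θ) Φ)
    (hlsc : LowerSemicontinuousOn Φ (probSimplex Θ))
    (g : (Θ → ℝ) → Θ → ℝ)
    (hg : ∀ μ ∈ probRelint Θ, HasFDerivAt Φ (pairCLM (g μ)) μ)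
    (μs μ'' : Θ → ℝ) (hμs : μs ∈ probRelint Θ) (hμ'' : μ'' ∈ probRelint Θ)
    (hne : μs ≠ μ'') (hD : breg Φ g μs μ'' = 0)
    (ℓ : 𝒜 → X → ℝ)
    (hatt : ∀ p ∈ probSimplex X, ∃ a : 𝒜, ∀ a' : 𝒜,
      ∑ x, p x * ℓ a x ≤ ∑ x, p x * ℓ a' x)
    (hL : StrictConcaveOn ℝ (probSimplex X) (fun p => ⨅ a : 𝒜, ∑ x, p x * ℓ a x))
    (η : ℝ) (hη : 0 < η) :
    ¬ (∀ A : Θ → 𝒜, ∀ μ ∈ probRelint Θ, ∃ ahat : 𝒜, ∀ x : X,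
        ℓ ahat x ≤ sInf ((fun μ' => ip μ' (fun θ => ℓ (A θ) x) + η⁻¹ * breg Φ g μ' μ) ''
          probSimplex Θ)) :=
  stmt_18_general hX Φ hconv g hg μs μ'' hμs hμ'' hne hD ℓ hatt hL η hη
end
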